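/- arXiv:2302.03260 — 2 statements merged into one kernel-verified Lean document; each statement's English description precedes it below -/
import Mathlib

section
/- Let G = Z₂ × Z₄ and θ a normalized orthomorphism of G with sets A₄₄, A₄₂, A₂₄, A₂₂ as defined by the orders of x and θ(x). Then |A₄₄ ∩ θ(A₄₄)| = |A₄₄ ∩ θ(A₂₄)| = |A₄₂ ∩ θ(A₄₄)| = |A₄₂ ∩ θ(A₂₄)| = 1. -/
/-- The group `ℤ₂ × ℤ₄` (written additively). -/
abbrev G24 : Type := ZMod 2 × ZMod 4

/-- A normalized orthomorphism: a bijection fixing the identity whose associated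
complete mapping `x ↦ -x + θ x` (i.e. `x⁻¹θ(x)` in additive notation) is a bijection. -/
def IsNormOrtho (θ : G24 → G24) : Prop :=
  Function.Bijective θ ∧ θ 0 = 0 ∧ Function.Bijective (fun x => -x + θ x)

/-- Orthogonality of orthomorphisms: `x ↦ θ₁(x)⁻¹θ₂(x)` is a bijection. -/
def Orthogonal (θ₁ θ₂ : G24 → G24) : Prop :=
  Function.Bijective (fun x => -θ₁ x + θ₂ x)

/-- `A i j θ = {x : order of x is i and order of θ(x) is j}`. -/
def A (i j : ℕ) (θ : G24 → G24) : Set G24 :=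
  {x | addOrderOf x = i ∧ addOrderOf (θ x) = j}

/-!
An element of `ℤ₂ × ℤ₄` has order 4 exactly when its `ℤ₄`-coordinate is odd, and since `θ` is
injective with `θ 0 = 0`, membership in each `A i j` depends only on the parities `p x`, `p (θ x)`.
The four sets of the theorem are then the images under `θ` of the sets of `x` with parity pattern
`(s, 1, t)` along `x, θ x, θ (θ x)`. Since `p (-x + θ x) = p x + p (θ x)` and `x ↦ -x + θ x` is
bijective, `p x ≠ p (θ x)` for exactly half of the elements; with the bijectivity of `θ` this gives
`|A₄₄| = 2`, and all four counts are determined by the one for `(1, 1, 1)`. That one is `1`: writing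
`A₄₄ = {a, b}`, `θ` maps `{a, b}` into the four odd elements, but neither onto `{a, b}` nor onto its
complement, since either would force `-a + θ a = -b + θ b` (the even elements form a Klein
four-group).
-/

open Finset Function

theorem Set.ncard_inter_image_eq_ncard_inter_preimage {α β : Type*} {f : α → β}
    (hf : Injective f) (s : Set β) (t : Set α) : (s ∩ f '' t).ncard = (t ∩ f ⁻¹' s).ncard := by
  rw [Set.inter_comm, ← Set.image_inter_preimage, Set.ncard_image_of_injective _ hf]

section ParityCount

variable {G : Type*} [AddGroup G] [Fintype G] (p : G →+ ZMod 2) {θ : G → G}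

theorem card_parity_pair_split_first (hθ : Bijective θ) (t : ZMod 2) :
    #{x | p x = 0 ∧ p (θ x) = t} + #{x | p x = 1 ∧ p (θ x) = t} = #{x | p x = t} := by
  simp only [card_filter, ← sum_add_distrib]
  rw [← hθ.sum_comp fun y => if p y = t then 1 else 0]
  refine sum_congr rfl fun x _ => ?_
  generalize p x = a; generalize p (θ x) = b
  revert a b t; decide

theorem card_parity_triple_split_first (hθ : Bijective θ) (s t : ZMod 2) :
    #{x | p x = 0 ∧ p (θ x) = s ∧ p (θ (θ x)) = t} +
      #{x | p x = 1 ∧ p (θ x) = s ∧ p (θ (θ x)) = t} = #{x | p x = s ∧ p (θ x) = t} := by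
  simp only [card_filter, ← sum_add_distrib]
  rw [← hθ.sum_comp fun y => if p y = s ∧ p (θ y) = t then 1 else 0]
  refine sum_congr rfl fun x _ => ?_
  generalize p x = a; generalize p (θ x) = b; generalize p (θ (θ x)) = c
  revert a b c s t; decide

theorem card_parity_triple_split_last (θ : G → G) (s t : ZMod 2) :
    #{x | p x = s ∧ p (θ x) = t ∧ p (θ (θ x)) = 0} +
      #{x | p x = s ∧ p (θ x) = t ∧ p (θ (θ x)) = 1} = #{x | p x = s ∧ p (θ x) = t} := by
  simp only [card_filter, ← sum_add_distrib]
  refine sum_congr rfl fun x _ => ?_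
  generalize p x = a; generalize p (θ x) = b; generalize p (θ (θ x)) = c
  revert a b c s t; decide

theorem two_mul_card_parity_one_one (hθ : Bijective θ) (hη : Bijective fun x => -x + θ x) :
    2 * #{x | p x = 1 ∧ p (θ x) = 1} = #{x | p x = 1} := by
  have hpointwise : ∀ x, (if p x = 1 then 1 else 0) + (if p (θ x) = 1 then 1 else 0) =
      (if p (-x + θ x) = 1 then 1 else 0) + 2 * (if p x = 1 ∧ p (θ x) = 1 then 1 else 0) := by
    intro x
    rw [map_add, map_neg]
    generalize p x = a; generalize p (θ x) = b
    revert a b; decide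
  have hsum := sum_congr rfl fun x (_ : x ∈ univ) => hpointwise x
  simp only [sum_add_distrib, ← mul_sum] at hsum
  rw [hθ.sum_comp fun y => if p y = 1 then 1 else 0,
    hη.sum_comp fun y => if p y = 1 then 1 else 0] at hsum
  simp only [card_filter]
  omega

end ParityCount

def parity : G24 →+ ZMod 2 :=
  (ZMod.castHom (by norm_num : 2 ∣ 4) (ZMod 2)).toAddMonoidHom.comp (AddMonoidHom.snd _ _)

namespace G24

theorem two_nsmul_eq_zero_iff (x : G24) : 2 • x = 0 ↔ parity x = 0 := by
  revert x; decide

theorem card_parity_eq_one : #{x : G24 | parity x = 1} = 4 := by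
  decide

theorem ne_zero_of_parity_eq_one {x : G24} (hx : parity x = 1) : x ≠ 0 := by
  rintro rfl
  simp at hx

theorem addOrderOf_eq_four_iff (x : G24) : addOrderOf x = 4 ↔ parity x = 1 := by
  constructor
  · intro hx
    have h2 : 2 • x ≠ 0 := nsmul_ne_zero_of_lt_addOrderOf (by norm_num) (by omega)
    rw [Ne, two_nsmul_eq_zero_iff] at h2
    revert h2; generalize parity x = a; revert a; decide
  · intro hx
    have hx4 : 2 ^ (1 + 1) • x = 0 := by revert x; decide
    exact addOrderOf_eq_prime_pow (by rw [pow_one, two_nsmul_eq_zero_iff, hx]; decide) hx4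

theorem addOrderOf_eq_two_iff (x : G24) : addOrderOf x = 2 ↔ x ≠ 0 ∧ parity x = 0 := by
  rw [← two_nsmul_eq_zero_iff]
  constructor
  · intro hx
    exact ⟨fun h => by simp [h] at hx, by simpa [hx] using addOrderOf_nsmul_eq_zero x⟩
  · rintro ⟨hx0, hx2⟩
    exact addOrderOf_eq_prime_pow (p := 2) (n := 0) (by simpa using hx0) (by simpa using hx2)

set_option synthInstance.maxSize 2000 in
/-- Exactly one of `c`, `d` lies in `{a, b}`; the other configurations force `-a + c = -b + d`. -/
theorem eq_iff_ne_of_neg_add_ne_neg_add {a b c d : G24} (ha : parity a = 1) (hb : parity b = 1)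
    (hc : parity c = 1) (hd : parity d = 1) (hab : a ≠ b) (hcd : c ≠ d) (hca : c ≠ a) (hdb : d ≠ b)
    (hne : -a + c ≠ -b + d) : c = b ↔ d ≠ a := by
  revert a b c d
  decide

end G24

theorem mem_A_four_four_iff (θ : G24 → G24) (x : G24) :
    x ∈ A 4 4 θ ↔ parity x = 1 ∧ parity (θ x) = 1 := by
  simp [A, G24.addOrderOf_eq_four_iff]

variable {θ : G24 → G24}

theorem mem_A_four_two_iff (hθ : Injective θ) (h0 : θ 0 = 0) (x : G24) :
    x ∈ A 4 2 θ ↔ parity x = 1 ∧ parity (θ x) = 0 := by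
  simp only [A, Set.mem_ofPred_eq, G24.addOrderOf_eq_four_iff, G24.addOrderOf_eq_two_iff]
  refine ⟨fun h => ⟨h.1, h.2.2⟩, fun h => ⟨h.1, ?_, h.2⟩⟩
  exact (hθ.ne_iff' h0).2 (G24.ne_zero_of_parity_eq_one h.1)

theorem mem_A_two_four_iff (h0 : θ 0 = 0) (x : G24) :
    x ∈ A 2 4 θ ↔ parity x = 0 ∧ parity (θ x) = 1 := by
  simp only [A, Set.mem_ofPred_eq, G24.addOrderOf_eq_four_iff, G24.addOrderOf_eq_two_iff]
  refine ⟨fun h => ⟨h.1.2, h.2⟩, fun h => ⟨⟨?_, h.1⟩, h.2⟩⟩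
  rintro rfl
  exact G24.ne_zero_of_parity_eq_one h.2 h0

theorem ncard_A_inter_image (hθ : Injective θ) {i j : ℕ} {s t : ZMod 2}
    (hi : ∀ x, x ∈ A i 4 θ ↔ parity x = s ∧ parity (θ x) = 1)
    (hj : ∀ x, x ∈ A 4 j θ ↔ parity x = 1 ∧ parity (θ x) = t) :
    (A 4 j θ ∩ θ '' A i 4 θ).ncard =
      #{x | parity x = s ∧ parity (θ x) = 1 ∧ parity (θ (θ x)) = t} := by
  rw [Set.ncard_inter_image_eq_ncard_inter_preimage hθ, ← Set.ncard_coe_finset]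
  congr 1
  ext x
  simp only [Set.mem_inter_iff, Set.mem_preimage, hi, hj, coe_filter, mem_univ, true_and,
    Set.mem_ofPred_eq]
  tauto

theorem IsNormOrtho.card_parity_one_one_one (hθ : IsNormOrtho θ) :
    #{x | parity x = 1 ∧ parity (θ x) = 1 ∧ parity (θ (θ x)) = 1} = 1 := by
  obtain ⟨hbij, h0, hη⟩ := hθ
  have hS : #{x | parity x = 1 ∧ parity (θ x) = 1} = 2 := by
    have := two_mul_card_parity_one_one parity hbij hη
    rw [G24.card_parity_eq_one] at this
    omega
  obtain ⟨a, b, hab, hS⟩ := card_eq_two.1 hS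
  have hmem : ∀ x, parity x = 1 ∧ parity (θ x) = 1 ↔ x ∈ ({a, b} : Finset G24) := by
    simp [← hS]
  have ha := (hmem a).2 (by simp)
  have hb := (hmem b).2 (by simp)
  have hfix : ∀ x, parity x = 1 → θ x ≠ x := by
    intro x hx hθx
    refine G24.ne_zero_of_parity_eq_one hx (hη.1 ?_)
    simp [hθx, h0]
  have hxor := G24.eq_iff_ne_of_neg_add_ne_neg_add ha.1 hb.1 ha.2 hb.2 hab (hbij.1.ne hab)
    (hfix a ha.1) (hfix b hb.1) (hη.1.ne hab)
  have hfilter : ({x | parity x = 1 ∧ parity (θ x) = 1 ∧ parity (θ (θ x)) = 1} : Finset G24) =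
      ({a, b} : Finset G24).filter fun x => θ x ∈ ({a, b} : Finset G24) := by
    ext x
    simp only [mem_filter, mem_univ, true_and, ← hmem]
    tauto
  rw [hfilter, filter_insert, filter_singleton]
  by_cases hθa : θ a = b
  · simp [hθa, hxor.1 hθa, hfix b hb.1]
  · have hθb : θ b = a := not_not.1 (mt hxor.2 hθa)
    simp [hθa, hθb, hfix a ha.1]

theorem card_A_inter_image (θ : G24 → G24) (hθ : IsNormOrtho θ) :
    (A 4 4 θ ∩ θ '' A 4 4 θ).ncard = 1 ∧ (A 4 4 θ ∩ θ '' A 2 4 θ).ncard = 1 ∧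
      (A 4 2 θ ∩ θ '' A 4 4 θ).ncard = 1 ∧ (A 4 2 θ ∩ θ '' A 2 4 θ).ncard = 1 := by
  have hinj : Injective θ := hθ.1.1
  have h44 := mem_A_four_four_iff θ
  have h42 := mem_A_four_two_iff hinj hθ.2.1
  have h24 := mem_A_two_four_iff hθ.2.1
  rw [ncard_A_inter_image hinj h44 h44, ncard_A_inter_image hinj h24 h44,
    ncard_A_inter_image hinj h44 h42, ncard_A_inter_image hinj h24 h42]
  have hpair := two_mul_card_parity_one_one parity hθ.1 hθ.2.2
  have hfirst := card_parity_pair_split_first parity hθ.1 1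
  have htriple := card_parity_triple_split_first parity hθ.1 1 1
  have hlast₀ := card_parity_triple_split_last parity θ 0 1
  have hlast₁ := card_parity_triple_split_last parity θ 1 1
  have h111 := hθ.card_parity_one_one_one
  rw [G24.card_parity_eq_one] at hpair hfirst
  omega
end

section
/- Let G = Z₂ × Z₄ and θ₁, θ₂ normalized orthomorphisms of G with respective sets A₄₄ and A₄₄′. If |A₄₄ ∩ A₄₄′| = 1, then θ₁ and θ₂ are not orthogonal. -/
/-!
A map of the eight-element group `ℤ₂ × ℤ₄` is determined by its tuple of values. A normalized
orthomorphism fixes `0` and permutes the seven nonzero elements, and the complete-mapping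
condition leaves 48 of the `7!` permutations. Since `x` has order 4 exactly when `x + x ≠ 0`,
both `|A₄₄ ∩ A₄₄′|` and orthogonality can be read off a pair of tuples, and running through all
`48²` pairs finds no orthogonal pair with `|A₄₄ ∩ A₄₄′| = 1`.
-/

section CompleteList

variable {α : Type*} {l : List α}

theorem List.map_perm_self_of_bijective (hl : l.Nodup) (hmem : ∀ x, x ∈ l) {f : α → α}
    (hf : Function.Bijective f) : (l.map f).Perm l :=
  (List.perm_ext_iff_of_nodup (hl.map hf.1) hl).2 fun a => by
    simpa [hmem] using hf.2 a

theorem List.ncard_setOf_eq_countP [DecidableEq α] (hl : l.Nodup) (hmem : ∀ x, x ∈ l)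
    (p : α → Prop) [DecidablePred p] : {x | p x}.ncard = l.countP (p ·) := by
  have hset : {x | p x} = ↑(l.filter (p ·)).toFinset := by
    ext x
    simp [hmem]
  rw [hset, Set.ncard_coe_finset, List.toFinset_card_of_nodup (hl.filter _),
    List.countP_eq_length_filter]

end CompleteList

theorem addOrderOf_eq_four_iff (x : G24) : addOrderOf x = 4 ↔ x + x ≠ 0 := by
  rw [← two_nsmul]
  constructor
  · intro h
    exact nsmul_ne_zero_of_lt_addOrderOf two_ne_zero (by omega)
  · intro h
    have h4 : 4 • x = 0 := by revert x; decide
    exact addOrderOf_eq_prime_pow (p := 2) (n := 1) (by simpa using h) h4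

def elems : List G24 := [(0,0), (0,1), (0,2), (0,3), (1,0), (1,1), (1,2), (1,3)]

theorem nodup_elems : elems.Nodup := by decide

theorem mem_elems (x : G24) : x ∈ elems := by revert x; decide

theorem nodup_zipWith_of_orthogonal {θ₁ θ₂ : G24 → G24} (h : Orthogonal θ₁ θ₂) :
    (List.zipWith (fun x y => -x + y) (elems.map θ₁) (elems.map θ₂)).Nodup := by
  rw [List.zipWith_map, List.zipWith_self]
  exact nodup_elems.map h.1

/-- The value tuples `elems.map θ` of the normalized orthomorphisms (`elems` starts with `0`). -/
def normOrthoTuples : List (List G24) :=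
  (elems.tail.permutations'.map (0 :: ·)).filter
    fun t => (List.zipWith (fun x y => -x + y) elems t).Nodup

theorem map_mem_normOrthoTuples {θ : G24 → G24} (h : IsNormOrtho θ) :
    elems.map θ ∈ normOrthoTuples := by
  obtain ⟨hbij, h0, hcomp⟩ := h
  have hcons : elems.map θ = 0 :: elems.tail.map θ := by rw [← h0]; rfl
  have hperm : (elems.tail.map θ).Perm elems.tail := by
    have := List.map_perm_self_of_bijective nodup_elems mem_elems hbij
    rw [hcons] at this
    exact this.cons_inv
  have hdiff := nodup_zipWith_of_orthogonal (θ₁ := id) hcomp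
  rw [List.map_id] at hdiff
  rw [hcons] at hdiff ⊢
  exact List.mem_filter.2 ⟨List.mem_map.2 ⟨_, List.mem_permutations'.2 hperm, rfl⟩,
    decide_eq_true hdiff⟩

def a44Count (t₁ t₂ : List G24) : ℕ :=
  (elems.zip (t₁.zip t₂)).countP fun p => p.1 + p.1 ≠ 0 ∧ p.2.1 + p.2.1 ≠ 0 ∧ p.2.2 + p.2.2 ≠ 0

theorem ncard_A44_inter (θ₁ θ₂ : G24 → G24) :
    (A 4 4 θ₁ ∩ A 4 4 θ₂).ncard = a44Count (elems.map θ₁) (elems.map θ₂) := by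
  have hset : A 4 4 θ₁ ∩ A 4 4 θ₂ = {x | x + x ≠ 0 ∧ θ₁ x + θ₁ x ≠ 0 ∧ θ₂ x + θ₂ x ≠ 0} := by
    ext x
    simp only [A, Set.mem_inter_iff, Set.mem_ofPred_eq, addOrderOf_eq_four_iff]
    tauto
  rw [hset, List.ncard_setOf_eq_countP nodup_elems mem_elems, a44Count, List.zip_map']
  nth_rw 2 [← List.map_id elems]
  rw [List.zip_map', List.countP_map]
  rfl

theorem not_nodup_of_a44Count_eq_one :
    ∀ t₁ ∈ normOrthoTuples, ∀ t₂ ∈ normOrthoTuples, a44Count t₁ t₂ = 1 →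
      ¬ (List.zipWith (fun x y => -x + y) t₁ t₂).Nodup := by
  decide +kernel

theorem not_orth_of_A44_inter_one (θ₁ θ₂ : G24 → G24)
    (h₁ : IsNormOrtho θ₁) (h₂ : IsNormOrtho θ₂)
    (h : (A 4 4 θ₁ ∩ A 4 4 θ₂).ncard = 1) : ¬ Orthogonal θ₁ θ₂ := fun horth =>
  not_nodup_of_a44Count_eq_one _ (map_mem_normOrthoTuples h₁) _ (map_mem_normOrthoTuples h₂)
    (ncard_A44_inter θ₁ θ₂ ▸ h) (nodup_zipWith_of_orthogonal horth)
end
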